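/- arXiv:1712.05014 — 2 statements merged into one kernel-verified Lean document; each statement's English description precedes it below -/
import Mathlib

section
/- Under the single-group group-adjusted mixture model, the conditional probability that θ_j = 0 given the group is significant equals (Lfdr_j − Lfdr_·)/(1 − Lfdr_·), where Lfdr_j(π_2) = (1-π_2)f_0(x_j)/m(x_j) and Lfdr_·(π_2) = ∏_{j=1}^n Lfdr_j(π_2). Formally: the ratio of ∑_{z: z_j = 0, ∑ z_k > 0} ∏_k [((1-z_k)f_0(x_k)+z_k f_1(x_k)) π_2^{z_k}(1-π_2)^{1-z_k}] to ∑_{z: ∑ z_k > 0} ∏_k [((1-z_k)f_0(x_k)+z_k f_1(x_k)) π_2^{z_k}(1-π_2)^{1-z_k}] equals (Lfdr_j − ∏_k Lfdr_k)/(1 − ∏_k Lfdr_k), provided the denominators are nonzero. -/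
/-- Under the single-group group-adjusted mixture model, the conditional probability that
θ_j = 0 given the group is significant equals (Lfdr_j − Lfdr_·)/(1 − Lfdr_·). -/
theorem cond_prob_theta_zero (n : ℕ) (hn : 2 ≤ n) (x : Fin n → ℝ) (f₀ f₁ : ℝ → ℝ)
    (hf₀ : ∀ j, 0 < f₀ (x j)) (hf₁ : ∀ j, 0 < f₁ (x j))
    (π₂ : ℝ) (hπ : 0 < π₂) (hπ1 : π₂ < 1) (j : Fin n)
    (L : Fin n → ℝ)
    (hL : ∀ k, L k = (1 - π₂) * f₀ (x k) / ((1 - π₂) * f₀ (x k) + π₂ * f₁ (x k)))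
    (hden : (∑ z ∈ Finset.univ.filter (fun z : Fin n → Bool => ∃ k, z k = true),
      ∏ k, ((if z k then f₁ (x k) else f₀ (x k)) * (if z k then π₂ else 1 - π₂))) ≠ 0)
    (hLprod : (∏ k, L k) ≠ 1) :
    (∑ z ∈ Finset.univ.filter (fun z : Fin n → Bool => z j = false ∧ ∃ k, z k = true),
        ∏ k, ((if z k then f₁ (x k) else f₀ (x k)) * (if z k then π₂ else 1 - π₂))) /
      (∑ z ∈ Finset.univ.filter (fun z : Fin n → Bool => ∃ k, z k = true),
        ∏ k, ((if z k then f₁ (x k) else f₀ (x k)) * (if z k then π₂ else 1 - π₂))) =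
      (L j - ∏ k, L k) / (1 - ∏ k, L k) := by
  classical
  set w : Fin n → Bool → ℝ :=
    fun k b => (if b then f₁ (x k) else f₀ (x k)) * (if b then π₂ else 1 - π₂) with hw
  set M : Fin n → ℝ := fun k => (1 - π₂) * f₀ (x k) + π₂ * f₁ (x k) with hM
  have hMpos : ∀ k, 0 < M k := fun k =>
    add_pos (mul_pos (by linarith) (hf₀ k)) (mul_pos hπ (hf₁ k))
  have hMne : ∀ k, M k ≠ 0 := fun k => ne_of_gt (hMpos k)
  have hwM : ∀ k, w k false + w k true = M k := by
    intro k; simp [hw, hM]; ring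
  have hLkM : ∀ k, L k * M k = w k false := by
    intro k
    have hm : ((1 - π₂) * f₀ (x k) + π₂ * f₁ (x k)) = M k := rfl
    rw [hL k, hm, div_mul_cancel₀ _ (hMne k)]
    simp [hw, mul_comm]
  -- total sum
  have hS : ∑ z : Fin n → Bool, ∏ k, w k (z k) = ∏ k, M k := by
    rw [← Fintype.piFinset_univ, ← Finset.prod_univ_sum]
    exact Finset.prod_congr rfl fun k _ => by
      rw [← hwM k]; simp [add_comm]
  -- sum over z with z j = false
  have hA : ∑ z ∈ Finset.univ.filter (fun z : Fin n → Bool => z j = false),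
      ∏ k, w k (z k) = w j false * ∏ k ∈ Finset.univ.erase j, M k := by
    have hpi : Fintype.piFinset (fun k : Fin n =>
        if k = j then ({false} : Finset Bool) else Finset.univ) =
        Finset.univ.filter (fun z : Fin n → Bool => z j = false) := by
      ext z
      simp only [Fintype.mem_piFinset, Finset.mem_filter, Finset.mem_univ, true_and]
      constructor
      · intro h; have := h j; simpa using this
      · intro h k
        by_cases hk : k = j
        · subst hk; simp [h]
        · simp [hk]
    rw [← hpi, ← Finset.prod_univ_sum]
    rw [← Finset.mul_prod_erase Finset.univ _ (Finset.mem_univ j)]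
    congr 1
    · simp
    · refine Finset.prod_congr rfl fun k hk => ?_
      have hk' : k ≠ j := (Finset.mem_erase.mp hk).1
      rw [if_neg hk', ← hwM k]
      simp [add_comm]
  -- complement filter is the constant-false function
  have hcf : Finset.univ.filter (fun z : Fin n → Bool => ¬ ∃ k, z k = true) =
      {fun _ => false} := by
    ext z
    simp only [Finset.mem_filter, Finset.mem_univ, true_and, Finset.mem_singleton,
      not_exists]
    constructor
    · intro h; funext k; simpa using h k
    · intro h k; rw [h]; simp
  have hcfval : (∏ k, w k false) = ∏ k, L k * M k :=
    Finset.prod_congr rfl fun k _ => (hLkM k).symm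
  -- denominator
  have hDen : ∑ z ∈ Finset.univ.filter (fun z : Fin n → Bool => ∃ k, z k = true),
      ∏ k, w k (z k) = (1 - ∏ k, L k) * ∏ k, M k := by
    have := Finset.sum_filter_add_sum_filter_not Finset.univ
      (fun z : Fin n → Bool => ∃ k, z k = true) (fun z => ∏ k, w k (z k))
    rw [hcf] at this
    simp only [Finset.sum_singleton] at this
    have h2 : (∏ k, w k ((fun _ => false) k)) = ∏ k, L k * M k := hcfval
    rw [h2, hS] at this
    rw [Finset.prod_mul_distrib] at this
    linarith [this]
  -- numerator
  have hNum : ∑ z ∈ Finset.univ.filter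
      (fun z : Fin n → Bool => z j = false ∧ ∃ k, z k = true),
      ∏ k, w k (z k) = (L j - ∏ k, L k) * ∏ k, M k := by
    have hsplit := Finset.sum_filter_add_sum_filter_not
      (Finset.univ.filter (fun z : Fin n → Bool => z j = false))
      (fun z : Fin n → Bool => ∃ k, z k = true) (fun z => ∏ k, w k (z k))
    rw [Finset.filter_filter, Finset.filter_filter] at hsplit
    have hcf2 : Finset.univ.filter
        (fun z : Fin n → Bool => z j = false ∧ ¬ ∃ k, z k = true) =
        {fun _ => false} := by
      ext z
      simp only [Finset.mem_filter, Finset.mem_univ, true_and, Finset.mem_singleton,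
        not_exists]
      constructor
      · rintro ⟨_, h⟩; funext k; simpa using h k
      · intro h; subst h; simp
    rw [hcf2] at hsplit
    simp only [Finset.sum_singleton] at hsplit
    have h2 : (∏ k, w k ((fun _ => false) k)) = ∏ k, L k * M k := hcfval
    rw [h2, hA] at hsplit
    have hLjM : w j false * ∏ k ∈ Finset.univ.erase j, M k = L j * ∏ k, M k := by
      rw [← hLkM j, ← Finset.mul_prod_erase Finset.univ M (Finset.mem_univ j)]
      ring
    rw [hLjM, Finset.prod_mul_distrib] at hsplit
    linarith [hsplit]
  rw [show (fun z : Fin n → Bool => ∏ k, ((if z k then f₁ (x k) else f₀ (x k)) *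
      (if z k then π₂ else 1 - π₂))) = fun z => ∏ k, w k (z k) from rfl] at *
  rw [hNum, hDen]
  have hPMne : (∏ k, M k) ≠ 0 := Finset.prod_ne_zero_iff.mpr fun k _ => hMne k
  rw [mul_div_mul_right _ _ hPMne]
end

section
/- Key inequality in the optimality proof: with ℓ_k ∈ [0,1], δ_k = I(ℓ_k ≤ c), α = (∑_k ℓ_k δ_k)/max(∑_k δ_k,1) ≤ c, and δ' any rule with (∑_k ℓ_k δ'_k)/max(∑_k δ'_k,1) ≤ α, it holds that ∑_k (1−δ_k) ℓ_k ≤ ∑_k (1−δ'_k) ℓ_k. -/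
/-- Key inequality in the optimality proof: with δ_k = I(ℓ_k ≤ c),
α = PFDR(δ) ≤ c, and PFDR(δ') ≤ α, we have
∑ (1−δ_k) ℓ_k ≤ ∑ (1−δ'_k) ℓ_k. -/
theorem key_inequality (N : ℕ) (ℓ : Fin N → ℝ)
    (hℓ : ∀ k, ℓ k ∈ Set.Icc (0 : ℝ) 1) (c α : ℝ) (hc : c ∈ Set.Ioo (0 : ℝ) 1)
    (δ δ' : Fin N → Bool) (hδ : ∀ k, δ k = decide (ℓ k ≤ c))
    (hα : (∑ k, if δ k then ℓ k else 0) / max (∑ k, if δ k then (1 : ℝ) else 0) 1 = α)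
    (hαc : α ≤ c)
    (hα' : (∑ k, if δ' k then ℓ k else 0) / max (∑ k, if δ' k then (1 : ℝ) else 0) 1 ≤ α) :
    (∑ k, if δ k then 0 else ℓ k) ≤ ∑ k, if δ' k then 0 else ℓ k := by
  classical
  set S : ℝ := ∑ k, if δ k then ℓ k else 0 with hSdef
  set S' : ℝ := ∑ k, if δ' k then ℓ k else 0 with hS'def
  set T : ℝ := ∑ k, if δ k then (1 : ℝ) else 0 with hTdef
  set T' : ℝ := ∑ k, if δ' k then (1 : ℝ) else 0 with hT'def
  have hle : ∀ i, δ i = true → ℓ i ≤ c := by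
    intro i h
    have h2 := hδ i; rw [h] at h2
    exact of_decide_eq_true h2.symm
  have hgt : ∀ i, δ i = false → c < ℓ i := by
    intro i h
    have h2 := hδ i; rw [h] at h2
    exact lt_of_not_ge (of_decide_eq_false h2.symm)
  have hSnonneg : 0 ≤ S := Finset.sum_nonneg fun k _ => by
    split
    · exact (hℓ k).1
    · exact le_refl 0
  have hTle : T ≤ max T 1 := le_max_left _ _
  have hM1 : (1 : ℝ) ≤ max T 1 := le_max_right _ _
  have hMpos : (0 : ℝ) < max T 1 := lt_of_lt_of_le one_pos hM1
  rw [div_eq_iff (ne_of_gt hMpos)] at hα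
  -- hα : S = α * max T 1
  have hαnonneg : 0 ≤ α := by
    nlinarith
  -- main claim : S' ≤ S
  have key : S' ≤ S := by
    by_cases hall : ∀ k, δ' k = false
    · have : S' = 0 := Finset.sum_eq_zero fun k _ => by rw [hall k]; simp
      linarith
    · push_neg at hall
      obtain ⟨k0, hk0⟩ := hall
      have hk0' : δ' k0 = true := by
        cases h : δ' k0 with
        | false => exact absurd h hk0
        | true => rfl
      have hT'1 : (1 : ℝ) ≤ T' := by
        have h := Finset.single_le_sum (f := fun k => if δ' k then (1 : ℝ) else 0)
          (fun k _ => by by_cases hk : δ' k = true <;> simp [hk]) (Finset.mem_univ k0)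
        simp only [hk0', if_true] at h
        exact h
      have hmax' : max T' 1 = T' := max_eq_left hT'1
      rw [hmax', div_le_iff₀ (by linarith)] at hα'
      -- hα' : S' ≤ α * T'
      have hTT' : T' ≤ T := by
        by_contra hlt
        push_neg at hlt
        -- there is k1 with δ' k1 true and δ k1 false
        have hex : ∃ k1, δ' k1 = true ∧ δ k1 = false := by
          by_contra hno
          push_neg at hno
          have : T' ≤ T := Finset.sum_le_sum fun i _ => by
            cases h1 : δ i with
            | true => simp [h1]; split <;> norm_num
            | false =>
              cases h2 : δ' i with
              | false => simp [h1, h2]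
              | true =>
                have := hno i h2
                rw [h1] at this
                exact absurd rfl this
          linarith
        obtain ⟨k1, hk1', hk1⟩ := hex
        have hck1 : c < ℓ k1 := hgt k1 hk1
        have main : (∑ k, ((if δ k then ℓ k else 0) + c * (if δ' k then (1 : ℝ) else 0)))
            < ∑ k, (c * (if δ k then (1 : ℝ) else 0) + (if δ' k then ℓ k else 0)) := by
          apply Finset.sum_lt_sum
          · intro i _
            have h1 := hle i
            have h2 := hgt i
            cases ha : δ i <;> cases hb : δ' i <;> simp [ha, hb]
            · linarith [h2 ha]
            · linarith [h1 ha]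
            · linarith [h1 ha]
          · exact ⟨k1, Finset.mem_univ _, by simp [hk1, hk1']; linarith⟩
        rw [Finset.sum_add_distrib, Finset.sum_add_distrib, ← Finset.mul_sum,
          ← Finset.mul_sum] at main
        -- main : S + c * T' < c * T + S'
        -- lower bound: S - S' ≥ α*T - α*T'
        have hlow1 : α * T ≤ S := by nlinarith
        nlinarith
      -- T' ≤ T case: S' ≤ α T' ≤ α T ≤ α max T 1 = S
      nlinarith
  -- conclude from key
  have e1 : (∑ k, if δ k then 0 else ℓ k) = (∑ k, ℓ k) - S := by
    rw [hSdef, ← Finset.sum_sub_distrib]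
    apply Finset.sum_congr rfl
    intro i _
    split <;> ring
  have e2 : (∑ k, if δ' k then 0 else ℓ k) = (∑ k, ℓ k) - S' := by
    rw [hS'def, ← Finset.sum_sub_distrib]
    apply Finset.sum_congr rfl
    intro i _
    split <;> ring
  rw [e1, e2]
  linarith
end
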